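/- arXiv:1407.1003 — 3 statements merged into one kernel-verified Lean document; each statement's English description precedes it below -/
import Mathlib

section
/- The polynomial D = det(x_{ij}) - 1 in 9 indeterminates x_{11},...,x_{33} over ℂ is irreducible. -/
/-!
Expanding along the first row, `det X - 1 = A * X (0, 0) + B`, where
`A = X (1, 1) * X (2, 2) - X (1, 2) * X (2, 1)` is the cofactor of `X (0, 0)` and neither `A`
nor `B` involves `X (0, 0)`. A polynomial of degree one in a variable is irreducible as soon as
its two coefficients are relatively prime. The cofactor `A` is irreducible by the same argument
(it is linear in `X (1, 1)` with coefficients `X (2, 2)` and `-X (1, 2) * X (2, 1)`), and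
`A ∤ B` because `A` vanishes at the origin while `B` takes the value `-1` there.
-/

open MvPolynomial Matrix

namespace MvPolynomial

variable {σ R : Type*} [CommRing R]

theorem notMem_vars_of_mem_supported_compl {p : MvPolynomial σ R} {i : σ}
    (hp : p ∈ supported R {i}ᶜ) : i ∉ p.vars :=
  fun hi => mem_supported.mp hp hi rfl

theorem irreducible_X_mul_X_sub_X_mul_X [IsDomain R] {a b c d : σ}
    (hab : a ≠ b) (hac : a ≠ c) (had : a ≠ d) (hbc : b ≠ c) (hbd : b ≠ d) :
    Irreducible (X a * X b - X c * X d : MvPolynomial σ R) := by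
  have hrel : IsRelPrime (X b : MvPolynomial σ R) (-(X c * X d)) := by
    rw [X_prime.irreducible.isRelPrime_iff_not_dvd, dvd_neg]
    intro h
    rcases X_prime.dvd_or_dvd h with h | h <;> rw [X_dvd_X] at h
    exacts [hbc h, hbd h]
  have := irreducible_mul_X_add (X b) (-(X c * X d)) a (X_ne_zero b) ?_ ?_ hrel
  · rwa [mul_comm, ← sub_eq_add_neg] at this
  all_goals
    refine notMem_vars_of_mem_supported_compl ?_
    apply_rules [neg_mem, mul_mem, X_mem_supported.mpr]

end MvPolynomial

theorem det_sub_one_irreducible :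
    Irreducible
      ((Matrix.of fun i j : Fin 3 => (MvPolynomial.X (i, j) :
          MvPolynomial (Fin 3 × Fin 3) ℂ)).det - 1) := by
  set A : MvPolynomial (Fin 3 × Fin 3) ℂ := X (1, 1) * X (2, 2) - X (1, 2) * X (2, 1)
  set B : MvPolynomial (Fin 3 × Fin 3) ℂ := X (0, 1) * X (1, 2) * X (2, 0)
    + X (0, 2) * X (1, 0) * X (2, 1) - X (0, 1) * X (1, 0) * X (2, 2)
    - X (0, 2) * X (1, 1) * X (2, 0) - 1
  have hD : (Matrix.of fun i j : Fin 3 => (X (i, j) : MvPolynomial (Fin 3 × Fin 3) ℂ)).det - 1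
      = A * X (0, 0) + B := by
    rw [det_fin_three]
    simp only [A, B, of_apply]
    ring
  have hA : Irreducible A :=
    irreducible_X_mul_X_sub_X_mul_X (by decide) (by decide) (by decide) (by decide) (by decide)
  have hAB : ¬ A ∣ B := fun h => by simpa [A, B] using map_dvd (eval 0) h
  rw [hD]
  refine irreducible_mul_X_add A B (0, 0) hA.ne_zero ?_ ?_ (hA.isRelPrime_iff_not_dvd.mpr hAB)
  all_goals
    refine notMem_vars_of_mem_supported_compl ?_
    apply_rules [sub_mem, add_mem, mul_mem, one_mem, X_mem_supported.mpr] <;> decide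
end

section
/- For any x, y in SL(3,ℂ): tr(xyx^{-1}y^{-1}) + tr(yxy^{-1}x^{-1}) = tr(x)tr(x^{-1})tr(y)tr(y^{-1}) + tr(x)tr(x^{-1}) + tr(y)tr(y^{-1}) + tr(xy)tr(x^{-1}y^{-1}) + tr(xy^{-1})tr(x^{-1}y) - tr(x^{-1})tr(y)tr(xy^{-1}) - tr(x)tr(y^{-1})tr(x^{-1}y) - tr(x)tr(y)tr(x^{-1}y^{-1}) - tr(xy)tr(x^{-1})tr(y^{-1}) - 3 (the fundamental commutator trace relation for SL(3,ℂ)). -/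
open Matrix

theorem fundamental_commutator_relation (x y : Matrix (Fin 3) (Fin 3) ℂ)
    (hx : x.det = 1) (hy : y.det = 1) :
    (x * y * x⁻¹ * y⁻¹).trace + (y * x * y⁻¹ * x⁻¹).trace =
      x.trace * (x⁻¹).trace * y.trace * (y⁻¹).trace
        + x.trace * (x⁻¹).trace + y.trace * (y⁻¹).trace
        + (x * y).trace * (x⁻¹ * y⁻¹).trace
        + (x * y⁻¹).trace * (x⁻¹ * y).trace
        - (x⁻¹).trace * y.trace * (x * y⁻¹).trace
        - x.trace * (y⁻¹).trace * (x⁻¹ * y).trace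
        - x.trace * y.trace * (x⁻¹ * y⁻¹).trace
        - (x * y).trace * (x⁻¹).trace * (y⁻¹).trace - 3 := by
  have hx' : x⁻¹ = x.adjugate := by
    rw [Matrix.inv_def, hx]; simp
  have hy' : y⁻¹ = y.adjugate := by
    rw [Matrix.inv_def, hy]; simp
  rw [Matrix.det_fin_three] at hx hy
  rw [hx', hy']
  simp only [Matrix.trace_fin_three, Matrix.mul_apply, Fin.sum_univ_three,
    Matrix.adjugate_fin_three, Matrix.cons_val', Matrix.cons_val_zero, Matrix.cons_val_one,
    Matrix.head_cons, Matrix.empty_val', Matrix.cons_val_fin_one, Matrix.head_fin_const,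
    Matrix.cons_val_two, Matrix.tail_cons, Matrix.of_apply]
  linear_combination ((-3) + (-1) * y 1 2 * y 2 1 * y 2 2 + y 1 1 * y 2 2 * y 2 2 + (-1) * y 1 1 * y 1 2 * y 2 1 + y 1 1 * y 1 1 * y 2 2 + (-1) * y 0 2 * y 2 0 * y 2 2 + (-1) * y 0 2 * y 1 1 * y 2 0 + (-1) * y 0 1 * y 1 0 * y 2 2 + (-1) * y 0 1 * y 1 0 * y 1 1 + y 0 0 * y 2 2 * y 2 2 + (-1) * y 0 0 * y 1 2 * y 2 1 + (3) * y 0 0 * y 1 1 * y 2 2 + y 0 0 * y 1 1 * y 1 1 + (-1) * y 0 0 * y 0 2 * y 2 0 + (-1) * y 0 0 * y 0 1 * y 1 0 + y 0 0 * y 0 0 * y 2 2 + y 0 0 * y 0 0 * y 1 1 : ℂ) * hx + ((-1) * x 1 2 * x 2 1 * x 2 2 + x 1 1 * x 2 2 * x 2 2 + (-1) * x 1 1 * x 1 2 * x 2 1 + x 1 1 * x 1 1 * x 2 2 + (-1) * x 0 2 * x 2 0 * x 2 2 + (2) * x 0 2 * x 1 1 * x 2 0 + (-3) * x 0 2 *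 x 1 0 * x 2 1 + (-3) * x 0 1 * x 1 2 * x 2 0 + (2) * x 0 1 * x 1 0 * x 2 2 + (-1) * x 0 1 * x 1 0 * x 1 1 + x 0 0 * x 2 2 * x 2 2 + (2) * x 0 0 * x 1 2 * x 2 1 + x 0 0 * x 1 1 * x 1 1 + (-1) * x 0 0 * x 0 2 * x 2 0 + (-1) * x 0 0 * x 0 1 * x 1 0 + x 0 0 * x 0 0 * x 2 2 + x 0 0 * x 0 0 * x 1 1 : ℂ) * hy
end

section
/- For any x, y in SL(3,ℂ): tr(y^{-1}x^{-1}yx^{-1}) = tr(x^{-1}y^{-1})tr(x^{-1}y) - tr(x)tr(y)tr(y^{-1}) + tr(y)tr(xy^{-1}) + tr(x) + tr(xy)tr(y^{-1}). -/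
open Matrix

theorem trace_mixed_word (x y : Matrix (Fin 3) (Fin 3) ℂ)
    (hx : x.det = 1) (hy : y.det = 1) :
    (y⁻¹ * x⁻¹ * y * x⁻¹).trace =
      (x⁻¹ * y⁻¹).trace * (x⁻¹ * y).trace - x.trace * y.trace * (y⁻¹).trace
        + y.trace * (x * y⁻¹).trace + x.trace + (x * y).trace * (y⁻¹).trace := by
  have hx' : x⁻¹ = x.adjugate := by rw [Matrix.inv_def, hx]; simp
  have hy' : y⁻¹ = y.adjugate := by rw [Matrix.inv_def, hy]; simp
  rw [Matrix.det_fin_three] at hx hy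
  rw [hx', hy', Matrix.adjugate_fin_three x, Matrix.adjugate_fin_three y]
  simp only [Matrix.trace_fin_three, Matrix.mul_apply, Fin.sum_univ_three,
    Matrix.cons_val', Matrix.cons_val_zero, Matrix.cons_val_one, Matrix.head_cons,
    Matrix.empty_val', Matrix.cons_val_fin_one, Matrix.head_fin_const,
    Matrix.cons_val_two, Matrix.tail_cons, Matrix.of_apply]
  linear_combination ((1) * x 2 2 * y 1 1 * y 1 2 * y 2 1 + (-1) * x 2 2 * y 1 1 ^ 2 * y 2 2 + (1) * x 2 2 * y 0 2 * y 1 0 * y 2 1 + (1) * x 2 2 * y 0 1 * y 1 2 * y 2 0 + (-2) * x 2 2 * y 0 1 * y 1 0 * y 2 2 + (1) * x 2 2 * y 0 0 * y 0 2 * y 2 0 + (-1) * x 2 2 * y 0 0 ^ 2 * y 2 2 + (-1) * x 2 1 * y 1 2 ^ 2 * y 2 1 + (1) * x 2 1 * y 1 1 * y 1 2 * y 2 2 + (-1) * x 2 1 * y 0 2 * y 1 2 * y 2 0 + (1) * x 2 1 * y 0 2 * y 1 0 * y 2 2 + (1) * x 2 1 * y 0 2 * y 1 0 * y 1 1 +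 (-1) * x 2 1 * y 0 1 * y 1 0 * y 1 2 + (1) * x 2 1 * y 0 0 * y 0 2 * y 1 0 + (-1) * x 2 1 * y 0 0 ^ 2 * y 1 2 + (-1) * x 2 0 * y 0 2 * y 1 2 * y 2 1 + (-1) * x 2 0 * y 0 2 * y 1 1 ^ 2 + (-1) * x 2 0 * y 0 2 ^ 2 * y 2 0 + (1) * x 2 0 * y 0 1 * y 1 2 * y 2 2 + (1) * x 2 0 * y 0 1 * y 1 1 * y 1 2 + (-1) * x 2 0 * y 0 1 * y 0 2 * y 1 0 + (1) * x 2 0 * y 0 0 * y 0 2 * y 2 2 + (1) * x 2 0 * y 0 0 * y 0 1 * y 1 2 + (-1) * x 1 2 * y 1 2 * y 2 1 ^ 2 + (1) * x 1 2 * y 1 1 * y 2 1 * y 2 2 + (-1) * x 1 2 * y 0 2 * y 2 0 * y 2 1 + (1) * x 1 2 * y 0 1 * y 2 0 * y 2 2 + (1) * x 1 2 * y 0 1 * y 1 1 * y 2 0 + (-1) * x 1 2 * y 0 1 * y 1 0 * y 2 1 + (1) * x 1 2 * y 0 0 * y 0 1 * y 2 0 + (-1) * x 1 2 * y 0 0 ^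 2 * y 2 1 + (1) * x 1 1 * y 1 2 * y 2 1 * y 2 2 + (-1) * x 1 1 * y 1 1 * y 2 2 ^ 2 + (-2) * x 1 1 * y 0 2 * y 1 1 * y 2 0 + (1) * x 1 1 * y 0 2 * y 1 0 * y 2 1 + (1) * x 1 1 * y 0 1 * y 1 2 * y 2 0 + (1) * x 1 1 * y 0 0 * y 0 1 * y 1 0 + (-1) * x 1 1 * y 0 0 ^ 2 * y 1 1 + (1) * x 1 0 * y 0 2 * y 2 1 * y 2 2 + (1) * x 1 0 * y 0 2 * y 1 1 * y 2 1 + (-1) * x 1 0 * y 0 1 * y 2 2 ^ 2 + (-1) * x 1 0 * y 0 1 * y 1 2 * y 2 1 + (-1) * x 1 0 * y 0 1 * y 0 2 * y 2 0 + (-1) * x 1 0 * y 0 1 ^ 2 * y 1 0 + (1) * x 1 0 * y 0 0 * y 0 2 * y 2 1 + (1) * x 1 0 * y 0 0 * y 0 1 * y 1 1 + (-1) * x 0 2 * y 1 2 * y 2 0 * y 2 1 + (-1) * x 0 2 * y 1 1 ^ 2 * y 2 0 + (1) * x 0 2 * y 1 0 * y 2 1 * y 2 2 + (1) * x 0 2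 * y 1 0 * y 1 1 * y 2 1 + (-1) * x 0 2 * y 0 2 * y 2 0 ^ 2 + (-1) * x 0 2 * y 0 1 * y 1 0 * y 2 0 + (1) * x 0 2 * y 0 0 * y 2 0 * y 2 2 + (1) * x 0 2 * y 0 0 * y 1 0 * y 2 1 + (1) * x 0 1 * y 1 2 * y 2 0 * y 2 2 + (1) * x 0 1 * y 1 1 * y 1 2 * y 2 0 + (-1) * x 0 1 * y 1 0 * y 2 2 ^ 2 + (-1) * x 0 1 * y 1 0 * y 1 2 * y 2 1 + (-1) * x 0 1 * y 0 2 * y 1 0 * y 2 0 + (-1) * x 0 1 * y 0 1 * y 1 0 ^ 2 + (1) * x 0 1 * y 0 0 * y 1 2 * y 2 0 + (1) * x 0 1 * y 0 0 * y 1 0 * y 1 1 + (1) * x 0 0 * y 0 2 * y 2 0 * y 2 2 + (1) * x 0 0 * y 0 2 * y 1 0 * y 2 1 + (1) * x 0 0 * y 0 1 * y 1 2 * y 2 0 + (1) * x 0 0 * y 0 1 * y 1 0 * y 1 1 + (-1) * x 0 0 * y 0 0 * y 2 2 ^ 2 + (-2) * x 0 0 * y 0 0 * y 1 2 * y 2 1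 + (-1) * x 0 0 * y 0 0 * y 1 1 ^ 2) * hx + ((1) * x 2 2 + (1) * x 1 1 + (1) * x 0 0) * hy
end
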